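/- Let S = (S,+,⋆) be a finite semifield of characteristic p with identity e and spread set C, and let K = {a ∈ S : a lies in the left, middle and right nucleus of S and a⋆b = b⋆a for all b ∈ S} be its center. Then the map a ↦ φ_a is a bijection from K onto the set {μ ∈ N_r(C) ∩ N_m(C) : μ∘φ = φ∘μ for all φ ∈ C}, where N_r(C) = {μ ∈ End_{F_p}(S) : μ∘φ ∈ C for all φ ∈ C} and N_m(C) = {μ ∈ End_{F_p}(S) : φ∘μ ∈ C for all φ ∈ C}. -/

import Mathlib

/-- A finite presemifield of characteristic `p`: a (nontrivial, finite) `ZMod p`-vector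
space equipped with a multiplication that is additive (equivalently, `ZMod p`-linear)
in each argument and has no zero divisors.  For `y : S`, the map `mul.flip y` is the
right-multiplication map `φ_y : x ↦ x ⋆ y`, so the spread set is `Set.range mul.flip`. -/
structure Presemifield (p : ℕ) (S : Type*) [AddCommGroup S] [Module (ZMod p) S] where
  mul : S →ₗ[ZMod p] S →ₗ[ZMod p] S
  eq_zero_or_eq_zero : ∀ x y : S, mul x y = 0 → x = 0 ∨ y = 0

/-- The spread set `C = {φ_y : y ∈ S}` of a presemifield. -/
def Presemifield.spread {p : ℕ} {S : Type*} [AddCommGroup S] [Module (ZMod p) S]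
    (M : Presemifield p S) : Set (S →ₗ[ZMod p] S) :=
  Set.range M.mul.flip

/-- The right-nucleus set `N_r(D) = {μ : μ∘φ ∈ D for all φ ∈ D}`. -/
def rightNucleusSet {p : ℕ} {S : Type*} [AddCommGroup S] [Module (ZMod p) S]
    (D : Set (S →ₗ[ZMod p] S)) : Set (S →ₗ[ZMod p] S) :=
  {μ | ∀ φ ∈ D, μ ∘ₗ φ ∈ D}

/-- The middle-nucleus set `N_m(D) = {μ : φ∘μ ∈ D for all φ ∈ D}`. -/
def middleNucleusSet {p : ℕ} {S : Type*} [AddCommGroup S] [Module (ZMod p) S]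
    (D : Set (S →ₗ[ZMod p] S)) : Set (S →ₗ[ZMod p] S) :=
  {μ | ∀ φ ∈ D, φ ∘ₗ μ ∈ D}

/-!
An endomorphism `μ ∈ N_r(C)` satisfies `μ (x ⋆ y) = x ⋆ μ y`, so evaluating at `y = e` shows
`μ = φ_a` with `a = μ e`. For `μ = φ_a`, membership in `N_r(C)` and `N_m(C)` is exactly
`a ∈ N_r` and `a ∈ N_m`, and commuting with `C` is exactly `a ⋆ b = b ⋆ a` (evaluate at `e`).
Finally a commuting element of `N_m ∩ N_r` lies in `N_l`, and `a ↦ φ_a` is injective since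
`φ_a e = a`.
-/

namespace Presemifield

variable {p : ℕ} {S : Type*} [AddCommGroup S] [Module (ZMod p) S] (M : Presemifield p S)

def leftNucleus : Set S :=
  {a | ∀ b c, M.mul (M.mul a b) c = M.mul a (M.mul b c)}

def middleNucleus : Set S :=
  {b | ∀ a c, M.mul (M.mul a b) c = M.mul a (M.mul b c)}

def rightNucleus : Set S :=
  {c | ∀ a b, M.mul (M.mul a b) c = M.mul a (M.mul b c)}

variable {M}

theorem mem_leftNucleus_of_mem_middleNucleus_of_mem_rightNucleus {a : S}
    (hm : a ∈ M.middleNucleus) (hr : a ∈ M.rightNucleus) (hc : ∀ b, M.mul a b = M.mul b a) :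
    a ∈ M.leftNucleus := fun b c =>
  calc M.mul (M.mul a b) c = M.mul (M.mul b a) c := by rw [hc b]
    _ = M.mul b (M.mul a c) := hm b c
    _ = M.mul b (M.mul c a) := by rw [hc c]
    _ = M.mul (M.mul b c) a := (hr b c).symm
    _ = M.mul a (M.mul b c) := (hc _).symm

theorem mul_flip_comp_comm {a : S} (hm : a ∈ M.middleNucleus) (hr : a ∈ M.rightNucleus)
    (hc : ∀ b, M.mul a b = M.mul b a) :
    ∀ φ ∈ M.spread, M.mul.flip a ∘ₗ φ = φ ∘ₗ M.mul.flip a := by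
  rintro _ ⟨y, rfl⟩
  ext x
  change M.mul (M.mul x y) a = M.mul (M.mul x a) y
  rw [hr x y, ← hc y, ← hm x y]

variable {e : S} (he₁ : ∀ x, M.mul e x = x)
include he₁

theorem mul_flip_injective : Function.Injective M.mul.flip := fun a b h => by
  simpa [he₁] using LinearMap.congr_fun h e

theorem map_mul_of_mem_rightNucleusSet {μ : S →ₗ[ZMod p] S}
    (hμ : μ ∈ rightNucleusSet M.spread) (x y : S) : μ (M.mul x y) = M.mul x (μ y) := by
  obtain ⟨z, hz⟩ := hμ _ ⟨y, rfl⟩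
  have hz_eq : z = μ y := by simpa [he₁] using LinearMap.congr_fun hz e
  simpa [hz_eq] using (LinearMap.congr_fun hz x).symm

theorem mul_map_of_mem_middleNucleusSet {μ : S →ₗ[ZMod p] S}
    (hμ : μ ∈ middleNucleusSet M.spread) (x y : S) :
    M.mul (μ x) y = M.mul x (M.mul (μ e) y) := by
  obtain ⟨z, hz⟩ := hμ _ ⟨y, rfl⟩
  have hz_eq : z = M.mul (μ e) y := by simpa [he₁] using LinearMap.congr_fun hz e
  simpa [hz_eq] using (LinearMap.congr_fun hz x).symm

theorem eq_mul_flip_of_mem_rightNucleusSet (he₂ : ∀ x, M.mul x e = x) {μ : S →ₗ[ZMod p] S}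
    (hμ : μ ∈ rightNucleusSet M.spread) : μ = M.mul.flip (μ e) := by
  ext x
  simpa [he₂] using map_mul_of_mem_rightNucleusSet he₁ hμ x e

theorem mul_flip_mem_rightNucleusSet_iff {a : S} :
    M.mul.flip a ∈ rightNucleusSet M.spread ↔ a ∈ M.rightNucleus := by
  refine ⟨fun h x y => map_mul_of_mem_rightNucleusSet he₁ h x y, ?_⟩
  rintro hr _ ⟨y, rfl⟩
  exact ⟨M.mul y a, by ext x; exact (hr x y).symm⟩

theorem mul_flip_mem_middleNucleusSet_iff {a : S} :
    M.mul.flip a ∈ middleNucleusSet M.spread ↔ a ∈ M.middleNucleus := by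
  refine ⟨fun h x y => by simpa [he₁] using mul_map_of_mem_middleNucleusSet he₁ h x y, ?_⟩
  rintro hm _ ⟨y, rfl⟩
  exact ⟨M.mul a y, by ext x; exact (hm x y).symm⟩

theorem mul_comm_of_mul_flip_comp_comm {a : S}
    (h : ∀ φ ∈ M.spread, M.mul.flip a ∘ₗ φ = φ ∘ₗ M.mul.flip a) (b : S) :
    M.mul a b = M.mul b a := by
  simpa [he₁] using (LinearMap.congr_fun (h _ ⟨b, rfl⟩) e).symm

end Presemifield

open Presemifield

theorem statement4_general (p : ℕ)
    (S : Type*) [AddCommGroup S] [Module (ZMod p) S]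
    (M : Presemifield p S) (e : S)
    (he₁ : ∀ x : S, M.mul e x = x) (he₂ : ∀ x : S, M.mul x e = x) :
    Set.BijOn (fun a : S => M.mul.flip a)
      {a : S |
        (∀ b c : S, M.mul (M.mul a b) c = M.mul a (M.mul b c)) ∧
        (∀ x c : S, M.mul (M.mul x a) c = M.mul x (M.mul a c)) ∧
        (∀ x b : S, M.mul (M.mul x b) a = M.mul x (M.mul b a)) ∧
        (∀ b : S, M.mul a b = M.mul b a)}
      {μ : S →ₗ[ZMod p] S |
        μ ∈ rightNucleusSet M.spread ∧ μ ∈ middleNucleusSet M.spread ∧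
        ∀ φ ∈ M.spread, μ ∘ₗ φ = φ ∘ₗ μ} := by
  refine ⟨?_, (mul_flip_injective he₁).injOn, ?_⟩
  · rintro a ⟨-, hm, hr, hc⟩
    exact ⟨(mul_flip_mem_rightNucleusSet_iff he₁).2 hr,
      (mul_flip_mem_middleNucleusSet_iff he₁).2 hm,
      mul_flip_comp_comm hm hr hc⟩
  · rintro μ ⟨hμr, hμm, hμc⟩
    have hμ := eq_mul_flip_of_mem_rightNucleusSet he₁ he₂ hμr
    rw [hμ] at hμr hμm hμc
    have hr := (mul_flip_mem_rightNucleusSet_iff he₁).1 hμr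
    have hm := (mul_flip_mem_middleNucleusSet_iff he₁).1 hμm
    have hc := mul_comm_of_mul_flip_comp_comm he₁ hμc
    exact ⟨μ e, ⟨mem_leftNucleus_of_mem_middleNucleus_of_mem_rightNucleus hm hr hc, hm, hr, hc⟩,
      hμ.symm⟩

theorem statement4 (p : ℕ) [Fact p.Prime]
    (S : Type*) [AddCommGroup S] [Module (ZMod p) S] [Finite S] [Nontrivial S]
    (M : Presemifield p S) (e : S)
    (he₁ : ∀ x : S, M.mul e x = x) (he₂ : ∀ x : S, M.mul x e = x) :
    Set.BijOn (fun a : S => M.mul.flip a)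
      {a : S |
        (∀ b c : S, M.mul (M.mul a b) c = M.mul a (M.mul b c)) ∧
        (∀ x c : S, M.mul (M.mul x a) c = M.mul x (M.mul a c)) ∧
        (∀ x b : S, M.mul (M.mul x b) a = M.mul x (M.mul b a)) ∧
        (∀ b : S, M.mul a b = M.mul b a)}
      {μ : S →ₗ[ZMod p] S |
        μ ∈ rightNucleusSet M.spread ∧ μ ∈ middleNucleusSet M.spread ∧
        ∀ φ ∈ M.spread, μ ∘ₗ φ = φ ∘ₗ μ} :=
  statement4_general p S M e he₁ he₂
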